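/- Let G be a finite abelian group, A ⊆ G nonempty, not contained in any coset of a proper subgroup, and with |A| ≥ c|G| for some constant c > 0. Then there exists k depending only on c (one may take k with (3/2)^{k-1} c > 1/2, times an extra factor for the final doubling) such that A⁽ᵏ⁾ = G. -/

import Mathlib

/-!
Iterate squaring: `Bₙ = A ^ 2 ^ n`. Each `Bₙ` contains a translate of `A`, so it lies in no coset
of a proper subgroup either. By Freiman's `3/2` theorem, either `|Bₙ Bₙ| ≥ (3/2)|Bₙ|`, or `Bₙ` lies
in a coset of a subgroup of order `< (3/2)|Bₙ|`; that subgroup must be `G`, so `|Bₙ| > (2/3)|G|`.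
Hence the density of `Bₙ` grows geometrically until it exceeds `1/2`, and a set of more than half
the group squares to the whole group by pigeonhole.
-/

open Pointwise Finset

namespace Finset

variable {G : Type*} [Group G] [DecidableEq G]

lemma mul_eq_univ_of_card_lt_card_add_card [Fintype G] {S T : Finset G}
    (h : Fintype.card G < #S + #T) : S * T = univ := by
  refine eq_univ_of_forall fun g ↦ ?_
  have hcard : Fintype.card G < #S + #(g • T⁻¹) := by
    rwa [card_smul_finset, card_inv]
  obtain ⟨s, hs⟩ :=
    inter_nonempty_of_card_lt_card_add_card (subset_univ S) (subset_univ _) hcard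
  obtain ⟨hsS, hsT⟩ := mem_inter.1 hs
  obtain ⟨t, htT, rfl⟩ := mem_smul_finset.1 hsT
  exact mem_mul.2 ⟨_, hsS, t⁻¹, mem_inv'.1 htT, by simp⟩

def NotInProperCoset (A : Finset G) : Prop :=
  ∀ (H : Subgroup G) (x : G), (A : Set G) ⊆ x • (H : Set G) → H = ⊤

lemma NotInProperCoset.of_smul_subset {A B : Finset G} (hA : NotInProperCoset A) {y : G}
    (hAB : y • A ⊆ B) : NotInProperCoset B := by
  intro H x hB
  refine hA H (y⁻¹ * x) ?_
  rw [mul_smul, Set.subset_smul_set_iff, inv_inv, ← coe_smul_finset]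
  exact (coe_subset.2 hAB).trans hB

lemma NotInProperCoset.pow {A : Finset G} (hA : NotInProperCoset A) (hne : A.Nonempty)
    {n : ℕ} (hn : n ≠ 0) : NotInProperCoset (A ^ n) := by
  obtain ⟨a, ha⟩ := hne
  obtain ⟨m, rfl⟩ := Nat.exists_eq_succ_of_ne_zero hn
  rw [pow_succ]
  exact hA.of_smul_subset (smul_finset_subset_mul (pow_mem_pow ha))

lemma NotInProperCoset.three_mul_card_le_two_mul_card_mul_self_or [Fintype G] {A : Finset G}
    (hA : NotInProperCoset A) :
    3 * #A ≤ 2 * #(A * A) ∨ 2 * Fintype.card G < 3 * #A := by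
  by_contra! h
  obtain ⟨hdoubling, hsparse⟩ := h
  obtain ⟨a, ha⟩ : A.Nonempty := card_pos.1 (by omega)
  have hsmall : (#(A * A) : ℚ) < 3 / 2 * #A := by
    have : (2 * #(A * A) : ℚ) < 3 * #A := by exact_mod_cast hdoubling
    linarith
  obtain ⟨H, _, hcardH, hcover⟩ := doubling_lt_three_halves hsmall
  obtain rfl := hA H a (hcover a ha).1
  have hcardG : (Fintype.card G : ℚ) < 3 / 2 * #A := by
    rwa [← Nat.card_eq_fintype_card, Subgroup.card_top, Nat.card_eq_fintype_card] at hcardH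
  have : (3 * #A : ℚ) ≤ 2 * Fintype.card G := by exact_mod_cast hsparse
  linarith

variable [Fintype G] {A : Finset G} {c : ℝ}

lemma card_lt_two_mul_card_pow_two_pow_or (hne : A.Nonempty) (hA : NotInProperCoset A)
    (hcard : c * Fintype.card G ≤ #A) (n : ℕ) :
    (Fintype.card G : ℝ) < 2 * #(A ^ 2 ^ n) ∨ (3 / 2) ^ n * c * Fintype.card G ≤ #(A ^ 2 ^ n) := by
  induction n with
  | zero => simpa using Or.inr hcard
  | succ n ih =>
    set B := A ^ 2 ^ n
    have hB := hA.pow hne (pow_ne_zero n two_ne_zero)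
    have hBB : (#B : ℝ) ≤ #(B * B) := by exact_mod_cast card_le_card_mul_self
    rw [pow_succ, pow_mul, sq]
    rcases ih with hdense | hgrowth
    · left; linarith
    rcases hB.three_mul_card_le_two_mul_card_mul_self_or with hdoubling | hdense
    · right
      have : (3 * #B : ℝ) ≤ 2 * #(B * B) := by exact_mod_cast hdoubling
      rw [pow_succ]
      linarith
    · left
      have : (2 * Fintype.card G : ℝ) < 3 * #B := by exact_mod_cast hdense
      linarith

lemma pow_two_pow_succ_eq_univ (hne : A.Nonempty) (hA : NotInProperCoset A)
    (hcard : c * Fintype.card G ≤ #A) {n : ℕ} (hn : 1 / 2 < (3 / 2) ^ n * c) :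
    A ^ 2 ^ (n + 1) = univ := by
  have hG : (0 : ℝ) < Fintype.card G := by exact_mod_cast Fintype.card_pos
  have hhalf : (Fintype.card G : ℝ) < 2 * #(A ^ 2 ^ n) := by
    rcases card_lt_two_mul_card_pow_two_pow_or hne hA hcard n with h | h
    · exact h
    · nlinarith
  rw [pow_succ, pow_mul, sq]
  exact mul_eq_univ_of_card_lt_card_add_card (by rw [← two_mul]; exact_mod_cast hhalf)

end Finset

/-- (Schnirelmann-type iteration) For every `c > 0` there is a `k`
depending only on `c` so that any nonempty subset `A` of a finite abelian group `G`,
not contained in any coset of a proper subgroup and of density at least `c`,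
satisfies `A⁽ᵏ⁾ = G`. -/
theorem stmt6 (c : ℝ) (hc : 0 < c) :
    ∃ k : ℕ, 1 ≤ k ∧
      ∀ (G : Type) (_ : CommGroup G) (_ : Fintype G) (_ : DecidableEq G)
        (A : Finset G), A.Nonempty →
        (¬ ∃ (H : Subgroup G), H ≠ ⊤ ∧ ∃ x : G, (A : Set G) ⊆ x • (H : Set G)) →
        c * Fintype.card G ≤ A.card →
        A ^ k = Finset.univ := by
  obtain ⟨N, hN⟩ := pow_unbounded_of_one_lt (1 / (2 * c)) (by norm_num : (1 : ℝ) < 3 / 2)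
  have hgrowth : 1 / 2 < (3 / 2 : ℝ) ^ N * c := by
    rw [div_lt_iff₀ (by positivity)] at hN
    linarith
  refine ⟨2 ^ (N + 1), Nat.one_le_two_pow, fun G _ _ _ A hne hcos hcard ↦ ?_⟩
  have hA : NotInProperCoset A := fun H x hsub ↦ by_contra fun hH ↦ hcos ⟨H, hH, x, hsub⟩
  exact pow_two_pow_succ_eq_univ hne hA hcard hgrowth
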